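/- arXiv:1402.6466 — 2 statements merged into one kernel-verified Lean document; each statement's English description precedes it below -/
import Mathlib

section
/- There exist δ > 0 and N such that for all n ≥ N and all integers k with (1−δ)·2log₂n ≤ k ≤ (1+δ)·2log₂n: (1) for every integer i with 2 ≤ i ≤ 2k/3, f_i ≤ f(k)²·n^{−0.3i}; and (2) for every integer i = k−j with 1 ≤ j ≤ k/3, f_i ≤ f(k)·n^{−0.3j}. Consequently, for every ε > 0 and constant c0 > 0 there is N' such that for all n ≥ N' and such k with f(k) ≥ c0, the sum Σ_{i=2}^{k−1} f_i ≤ ε·f(k)², and hence the number X of independent sets of size k in G(n,1/2) satisfies Var(X) ≤ E(X) + ε·E(X)². -/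
/-!
Write `f_i = f(k)² · R_i` with `R_i = C(k,i) C(n-k,k-i) 2^{C(i,2)} / C(n,k)`. Since
`C(n-k,k-i) ≤ C(n,k) (2k/n)^i`, one gets `R_i ≤ (k · 2^{(i-1)/2} · 2k/n)^i`, which is at most
`n^{-0.3 i}` when `i ≤ 2k/3` because `2^k ≈ n²` and `k = O(log n)`. For `i = k - j` close to `k`,
`f_i = f(k) · C(k,j) C(n-k,j) 2^{-(k-j)j - C(j,2)} ≤ f(k) (kn / 2^{k-j})^j ≤ f(k) n^{-0.3 j}`.
So every `f_i` with `2 ≤ i ≤ k - 1` is at most `(f(k)² + f(k)) n^{-0.3}`; as `f(k) ≥ c0` and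
there are fewer than `k = n^{o(1)}` of them, their sum is `o(f(k)²)`.

For the variance, `Cov(X_K, X_{K'}) ≤ 2^{-2C(k,2)+C(i,2)} - 2^{-2C(k,2)}` when `|K ∩ K'| = i`,
which vanishes for `i ≤ 1`; there are at most `C(n,k) C(k,i) C(n-k,k-i)` such ordered pairs, so
`Var X ≤ f(k) + ∑_{i=2}^{k-1} f_i`.
-/

open MeasureTheory ProbabilityTheory Filter Real

namespace RandomBipartiteDecomposition

/-- The set of edges of the complete bipartite graph with vertex classes `A` and `B`. -/
def bicliqueEdges {V : Type*} (A B : Finset V) : Set (Sym2 V) :=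
  {e | ∃ a ∈ A, ∃ b ∈ B, e = s(a, b)}

/-- `A`, `B` are the vertex classes of a complete bipartite subgraph of `G`. -/
def IsBicliqueIn {V : Type*} (G : SimpleGraph V) (A B : Finset V) : Prop :=
  A.Nonempty ∧ B.Nonempty ∧ Disjoint A B ∧ ∀ a ∈ A, ∀ b ∈ B, G.Adj a b

/-- A complete bipartite subgraph is nontrivial if both classes have at least 2 vertices. -/
def IsNontrivialBicliqueIn {V : Type*} (G : SimpleGraph V) (A B : Finset V) : Prop :=
  2 ≤ A.card ∧ 2 ≤ B.card ∧ Disjoint A B ∧ ∀ a ∈ A, ∀ b ∈ B, G.Adj a b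

/-- `P` lists `m` pairwise edge-disjoint complete bipartite subgraphs of `G` such that
every edge of `G` belongs to exactly one of them. -/
def IsBicliqueDecomp {V : Type*} (G : SimpleGraph V) (m : ℕ)
    (P : Fin m → Finset V × Finset V) : Prop :=
  (∀ i, IsBicliqueIn G (P i).1 (P i).2) ∧
  (∀ i j, i ≠ j →
    Disjoint (bicliqueEdges (P i).1 (P i).2) (bicliqueEdges (P j).1 (P j).2)) ∧
  (⋃ i, bicliqueEdges (P i).1 (P i).2) = G.edgeSet

/-- As above but with all complete bipartite subgraphs nontrivial. -/
def IsNontrivialBicliqueDecomp {V : Type*} (G : SimpleGraph V) (m : ℕ)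
    (P : Fin m → Finset V × Finset V) : Prop :=
  (∀ i, IsNontrivialBicliqueIn G (P i).1 (P i).2) ∧
  (∀ i j, i ≠ j →
    Disjoint (bicliqueEdges (P i).1 (P i).2) (bicliqueEdges (P j).1 (P j).2)) ∧
  (⋃ i, bicliqueEdges (P i).1 (P i).2) = G.edgeSet

/-- `τ(G)`: the minimum number of pairwise edge-disjoint complete bipartite subgraphs
of `G` so that each edge of `G` belongs to exactly one of them. -/
noncomputable def tau {V : Type*} (G : SimpleGraph V) : ℕ :=
  sInf {m | ∃ P : Fin m → Finset V × Finset V, IsBicliqueDecomp G m P}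

/-- `τ'(G)`: the minimum number of pairwise edge-disjoint *nontrivial* complete bipartite
subgraphs of `G` covering all edges of `G`; `⊤` if there is no such cover. -/
noncomputable def tau' {V : Type*} (G : SimpleGraph V) : ℕ∞ :=
  sInf {t : ℕ∞ | ∃ m : ℕ, t = m ∧ ∃ P : Fin m → Finset V × Finset V,
    IsNontrivialBicliqueDecomp G m P}

/-- `S` is an independent set of `G`. -/
def IsIndepFinset {V : Type*} (G : SimpleGraph V) (S : Finset V) : Prop :=
  ∀ a ∈ S, ∀ b ∈ S, ¬ G.Adj a b

/-- `α(G)`: the maximum size of an independent set of `G`. -/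
noncomputable def alpha {V : Type*} (G : SimpleGraph V) : ℕ :=
  sSup {k | ∃ S : Finset V, S.card = k ∧ IsIndepFinset G S}

/-- `S` induces in `G` a complete bipartite graph with nonempty vertex classes `A`, `B`. -/
def IsInducedCompleteBipartite {V : Type*} (G : SimpleGraph V) (S A B : Finset V) : Prop :=
  A.Nonempty ∧ B.Nonempty ∧ Disjoint A B ∧ (A : Set V) ∪ (B : Set V) = (S : Set V) ∧
  ∀ u ∈ S, ∀ v ∈ S, (G.Adj u v ↔ ((u ∈ A ∧ v ∈ B) ∨ (u ∈ B ∧ v ∈ A)))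

/-- `β(G)`: the largest number of vertices of an induced complete bipartite subgraph. -/
noncomputable def beta {V : Type*} (G : SimpleGraph V) : ℕ :=
  sSup {k | ∃ S A B : Finset V, IsInducedCompleteBipartite G S A B ∧ S.card = k}

/-- The Bernoulli measure on `Bool` giving `true` probability `p`. -/
noncomputable def bernoulliBool (p : ℝ) : Measure Bool :=
  p.toNNReal • Measure.dirac true + (1 - p).toNNReal • Measure.dirac false

instance (p : ℝ) : IsFiniteMeasure (bernoulliBool p) := by
  unfold bernoulliBool; infer_instance

/-- The Erdős–Rényi random graph `G(n,p)`: each unordered pair of vertices flips an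
independent `p`-coin. Events about the graph are subsets of the coin-flip space. -/
noncomputable def erdosRenyi (n : ℕ) (p : ℝ) : Measure (Sym2 (Fin n) → Bool) :=
  Measure.pi fun _ => bernoulliBool p

/-- The simple graph determined by the coin flips `ω`. -/
def graphOf (n : ℕ) (ω : Sym2 (Fin n) → Bool) : SimpleGraph (Fin n) :=
  SimpleGraph.fromEdgeSet {e | ω e = true}

/-- `f(k) = C(n,k) · 2^{-C(k,2)}`, the expected number of independent sets of size `k`
in `G(n,1/2)`. -/
noncomputable def f (n k : ℕ) : ℝ :=
  (n.choose k : ℝ) * (2 : ℝ) ^ (-(k.choose 2 : ℤ))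

/-- `k₀(n)`: the largest `k` with `f(k) ≥ 1`. -/
noncomputable def k0 (n : ℕ) : ℕ := sSup {k | 1 ≤ f n k}

/-- `g(k) = C(n,k+2) · (2^{k+1} - 1) · 2^{-C(k+2,2)}`, the expected number of induced
complete bipartite subgraphs on `k+2` vertices in `G(n,1/2)`. -/
noncomputable def g (n k : ℕ) : ℝ :=
  (n.choose (k + 2) : ℝ) * ((2 : ℝ) ^ (k + 1) - 1) * (2 : ℝ) ^ (-((k + 2).choose 2 : ℤ))

/-- The number of independent sets of size `k` in the graph determined by `ω`. -/
noncomputable def numIndep (n k : ℕ) (ω : Sym2 (Fin n) → Bool) : ℕ :=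
  Set.ncard {S : Finset (Fin n) | S.card = k ∧ IsIndepFinset (graphOf n ω) S}

/-- The number of `m`-element vertex subsets inducing a complete bipartite graph in the
graph determined by `ω`. -/
noncomputable def numBip (n m : ℕ) (ω : Sym2 (Fin n) → Bool) : ℕ :=
  Set.ncard {S : Finset (Fin n) | S.card = m ∧
    ∃ A B : Finset (Fin n), IsInducedCompleteBipartite (graphOf n ω) S A B}

/-- `f_i`: the contribution to `Σ_{K ~ K'} E(X_K X_{K'})` from ordered pairs of `k`-subsets
with intersection of size `i`. -/
noncomputable def fi (n k i : ℕ) : ℝ :=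
  (n.choose k : ℝ) * (k.choose i : ℝ) * ((n - k).choose (k - i) : ℝ) *
    (2 : ℝ) ^ (-(2 * (k.choose 2) : ℤ) + (i.choose 2 : ℤ))

open Finset

theorem choose_mul_div_le_choose_succ {m j k : ℕ} (hjk : j < k) (hkm : k ≤ m) :
    (m.choose j : ℝ) * (((m : ℝ) - k + 1) / k) ≤ m.choose (j + 1) := by
  have hj : (j : ℝ) + 1 ≤ k := by exact_mod_cast hjk
  have hm : (k : ℝ) ≤ m := by exact_mod_cast hkm
  have hsucc : (m.choose (j + 1) : ℝ) * (j + 1) = m.choose j * ((m : ℝ) - j) := by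
    have := congrArg (Nat.cast : ℕ → ℝ) (Nat.choose_succ_right_eq m j)
    push_cast [Nat.cast_sub (hjk.le.trans hkm)] at this
    exact this
  have hratio : ((m : ℝ) - k + 1) / k ≤ ((m : ℝ) - j) / (j + 1) :=
    div_le_div₀ (by linarith) (by linarith) (by positivity) hj
  calc (m.choose j : ℝ) * (((m : ℝ) - k + 1) / k)
      ≤ m.choose j * (((m : ℝ) - j) / (j + 1)) := by gcongr
    _ = m.choose (j + 1) := by field_simp; linarith

theorem choose_sub_mul_pow_le_choose {m k i : ℕ} (hkm : k ≤ m) (hik : i ≤ k) :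
    (m.choose (k - i) : ℝ) * (((m : ℝ) - k + 1) / k) ^ i ≤ m.choose k := by
  set q : ℝ := ((m : ℝ) - k + 1) / k
  have hq : 0 ≤ q := by
    have : (k : ℝ) ≤ m := by exact_mod_cast hkm
    exact div_nonneg (by linarith) k.cast_nonneg
  induction i with
  | zero => simp
  | succ i ih =>
    have hsub : k - i = k - (i + 1) + 1 := by omega
    calc (m.choose (k - (i + 1)) : ℝ) * q ^ (i + 1)
        = (m.choose (k - (i + 1)) * q) * q ^ i := by ring
      _ ≤ m.choose (k - i) * q ^ i := by
          rw [hsub]; gcongr; exact choose_mul_div_le_choose_succ (by omega) hkm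
      _ ≤ m.choose k := ih (by omega)

theorem choose_sub_mul_div_pow_le_choose {n k i : ℕ} (hk : 0 < k) (h4k : 4 * k ≤ n)
    (hik : i ≤ k) : ((n - k).choose (k - i) : ℝ) * ((n : ℝ) / (2 * k)) ^ i ≤ n.choose k := by
  have hk' : (0 : ℝ) < k := by exact_mod_cast hk
  have h4k' : 4 * (k : ℝ) ≤ n := by exact_mod_cast h4k
  have hq : (n : ℝ) / (2 * k) ≤ (((n - k : ℕ) : ℝ) - k + 1) / k := by
    rw [Nat.cast_sub (by omega), div_le_div_iff₀ (by positivity) hk']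
    nlinarith
  calc ((n - k).choose (k - i) : ℝ) * ((n : ℝ) / (2 * k)) ^ i
      ≤ (n - k).choose (k - i) * ((((n - k : ℕ) : ℝ) - k + 1) / k) ^ i := by gcongr
    _ ≤ (n - k).choose k := choose_sub_mul_pow_le_choose (by omega) hik
    _ ≤ n.choose k := by exact_mod_cast Nat.choose_le_choose k (Nat.sub_le n k)

theorem add_choose_two (m j : ℕ) : (m + j).choose 2 = m.choose 2 + m * j + j.choose 2 := by
  apply Nat.cast_injective (R := ℚ)
  push_cast [Nat.cast_choose_two]
  ring

theorem two_pow_choose_two_le_rpow_pow {i : ℕ} {x : ℝ} (h : ((i : ℝ) - 1) / 2 ≤ x) :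
    (2 : ℝ) ^ i.choose 2 ≤ ((2 : ℝ) ^ x) ^ i := by
  rw [← Real.rpow_natCast, ← Real.rpow_natCast, ← Real.rpow_mul zero_le_two, Nat.cast_choose_two]
  exact Real.rpow_le_rpow_of_exponent_le one_le_two (by nlinarith [i.cast_nonneg (α := ℝ)])

theorem f_nonneg (n k : ℕ) : 0 ≤ f n k := by
  unfold f
  positivity

theorem f_sq_eq (n k : ℕ) : f n k ^ 2 = n.choose k ^ 2 * (2 : ℝ) ^ (-(2 * k.choose 2 : ℤ)) := by
  rw [f, mul_pow, sq ((2 : ℝ) ^ _), ← zpow_add₀ two_ne_zero]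
  congr 2
  ring

theorem fi_eq_choose_mul (n k i : ℕ) : fi n k i =
    n.choose k * (k.choose i * (n - k).choose (k - i) * 2 ^ i.choose 2) *
      (2 : ℝ) ^ (-(2 * k.choose 2 : ℤ)) := by
  rw [fi, zpow_add₀ two_ne_zero, zpow_natCast]
  ring

theorem fi_sub_eq {n k j : ℕ} (hjk : j ≤ k) : fi n k (k - j) =
    f n k * (k.choose j * (n - k).choose j / 2 ^ ((k - j) * j + j.choose 2)) := by
  have hexp : -(2 * k.choose 2 : ℤ) + ((k - j).choose 2 : ℕ) =
      -(k.choose 2 : ℤ) + -(((k - j) * j + j.choose 2 : ℕ) : ℤ) := by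
    have hc := add_choose_two (k - j) j
    rw [Nat.sub_add_cancel hjk] at hc
    rw [hc]
    push_cast
    ring
  rw [fi, f, Nat.choose_symm hjk, Nat.sub_sub_self hjk, hexp, zpow_add₀ two_ne_zero]
  simp only [zpow_neg, zpow_natCast]
  ring

structure IsTwoLogScale (n k : ℕ) : Prop where
  two_le : 2 ≤ k
  two_mul_sq_le : 2 * (k : ℝ) ^ 2 ≤ (n : ℝ) ^ (0.02 : ℝ)
  rpow_le_two_pow : (n : ℝ) ^ (1.98 : ℝ) ≤ 2 ^ k
  two_pow_le_rpow : (2 : ℝ) ^ k ≤ (n : ℝ) ^ (2.02 : ℝ)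

theorem eventually_two_mul_sq_logb_le :
    ∀ᶠ x : ℝ in atTop, 2 * (2.02 * logb 2 x) ^ 2 ≤ x ^ (0.02 : ℝ) := by
  have hlog2 : 0 < Real.log 2 := Real.log_pos one_lt_two
  have hc : 0 < Real.log 2 ^ 2 / (2 * 2.02 ^ 2) := by positivity
  filter_upwards [(isLittleO_log_rpow_rpow_atTop 2 (by norm_num : (0 : ℝ) < 0.02)).bound hc,
    eventually_ge_atTop 0] with x hx hx0
  rw [Real.norm_of_nonneg (Real.rpow_nonneg hx0 _), Real.rpow_two, Real.norm_eq_abs,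
    abs_of_nonneg (sq_nonneg _), div_mul_eq_mul_div, le_div_iff₀ (by positivity)] at hx
  calc 2 * (2.02 * logb 2 x) ^ 2 = 2 * 2.02 ^ 2 * Real.log x ^ 2 / Real.log 2 ^ 2 := by
        rw [← Real.log_div_log]
        field_simp
    _ ≤ x ^ (0.02 : ℝ) := by
        rw [div_le_iff₀ (by positivity)]
        linarith

theorem eventually_isTwoLogScale : ∀ᶠ n : ℕ in atTop, ∀ k : ℕ,
    (1 - 1 / 100) * (2 * logb 2 n) ≤ k → k ≤ (1 + 1 / 100) * (2 * logb 2 n) →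
    IsTwoLogScale n k := by
  filter_upwards [tendsto_natCast_atTop_atTop.eventually eventually_two_mul_sq_logb_le,
    eventually_ge_atTop 4] with n hsq hn4 k hk₁ hk₂
  have hn : (4 : ℝ) ≤ n := by exact_mod_cast hn4
  have hlogb : 2 ≤ logb 2 (n : ℝ) := by
    rw [Real.le_logb_iff_rpow_le one_lt_two (by linarith)]
    norm_num [hn4]
  have hpow : ∀ a : ℝ, (n : ℝ) ^ a = 2 ^ (logb 2 n * a) := fun a => by
    rw [Real.rpow_mul zero_le_two, Real.rpow_logb two_pos (by norm_num) (by linarith)]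
  have hk : (2 : ℝ) ^ k = 2 ^ (k : ℝ) := (Real.rpow_natCast 2 k).symm
  refine ⟨?_, ?_, ?_, ?_⟩
  · have : (1 : ℝ) < k := by linarith
    exact_mod_cast this
  · calc 2 * (k : ℝ) ^ 2 ≤ 2 * (2.02 * logb 2 n) ^ 2 := by gcongr; linarith
      _ ≤ _ := hsq
  · rw [hpow, hk]
    exact Real.rpow_le_rpow_of_exponent_le one_le_two (by linarith)
  · rw [hpow, hk]
    exact Real.rpow_le_rpow_of_exponent_le one_le_two (by linarith)

namespace IsTwoLogScale

variable {n k : ℕ}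

theorem one_le (h : IsTwoLogScale n k) : (1 : ℝ) ≤ n := by
  rcases Nat.eq_zero_or_pos n with rfl | hn
  · have hsq := h.two_mul_sq_le
    rw [Nat.cast_zero, Real.zero_rpow (by norm_num)] at hsq
    have : (2 : ℝ) ≤ k := by exact_mod_cast h.two_le
    nlinarith
  · exact_mod_cast hn

theorem le_rpow (h : IsTwoLogScale n k) : (k : ℝ) ≤ (n : ℝ) ^ (0.02 : ℝ) := by
  have : (k : ℝ) ≤ k ^ 2 := by exact_mod_cast Nat.le_self_pow two_ne_zero k
  nlinarith [h.two_mul_sq_le, sq_nonneg (k : ℝ)]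

theorem four_mul_le (h : IsTwoLogScale n k) : 4 * k ≤ n := by
  have hk : (2 : ℝ) ≤ k := by exact_mod_cast h.two_le
  have : 4 * (k : ℝ) ≤ n := calc
    4 * (k : ℝ) ≤ 2 * k ^ 2 := by nlinarith
    _ ≤ (n : ℝ) ^ (0.02 : ℝ) := h.two_mul_sq_le
    _ ≤ (n : ℝ) ^ (1 : ℝ) := Real.rpow_le_rpow_of_exponent_le h.one_le (by norm_num)
    _ = n := Real.rpow_one _
  exact_mod_cast this

theorem mul_two_rpow_le (h : IsTwoLogScale n k) :
    (k : ℝ) * 2 ^ ((k : ℝ) / 3) ≤ n / (2 * k) * (n : ℝ) ^ (-(0.3 : ℝ)) := by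
  have hn : (0 : ℝ) < n := zero_lt_one.trans_le h.one_le
  have hk : (0 : ℝ) < k := by exact_mod_cast zero_lt_two.trans_le h.two_le
  have hcube : (2 : ℝ) ^ ((k : ℝ) / 3) ≤ (n : ℝ) ^ (2.02 / 3 : ℝ) := by
    have h2 : (2 : ℝ) ^ ((k : ℝ) / 3) = ((2 : ℝ) ^ k) ^ ((1 : ℝ) / 3) := by
      rw [← Real.rpow_natCast, ← Real.rpow_mul zero_le_two]
      ring_nf
    have hn3 : (n : ℝ) ^ (2.02 / 3 : ℝ) = ((n : ℝ) ^ (2.02 : ℝ)) ^ ((1 : ℝ) / 3) := by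
      rw [← Real.rpow_mul hn.le]
      norm_num
    rw [h2, hn3]
    gcongr
    exact h.two_pow_le_rpow
  rw [div_mul_eq_mul_div, le_div_iff₀ (by positivity)]
  calc (k : ℝ) * 2 ^ ((k : ℝ) / 3) * (2 * k) = 2 * k ^ 2 * 2 ^ ((k : ℝ) / 3) := by ring
    _ ≤ (n : ℝ) ^ (0.02 : ℝ) * (n : ℝ) ^ (2.02 / 3 : ℝ) := by
      gcongr
      exact h.two_mul_sq_le
    _ = (n : ℝ) ^ (0.02 + 2.02 / 3 : ℝ) := (Real.rpow_add hn _ _).symm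
    _ ≤ (n : ℝ) ^ (1 + -0.3 : ℝ) := Real.rpow_le_rpow_of_exponent_le h.one_le (by norm_num)
    _ = n * (n : ℝ) ^ (-(0.3 : ℝ)) := by rw [Real.rpow_add hn, Real.rpow_one]

theorem choose_mul_choose_mul_two_pow_le (h : IsTwoLogScale n k) {i : ℕ}
    (hi : (i : ℝ) ≤ 2 * k / 3) :
    (k.choose i : ℝ) * (n - k).choose (k - i) * 2 ^ i.choose 2 ≤
      n.choose k * (n : ℝ) ^ (-(0.3 : ℝ) * i) := by
  have hik : i ≤ k := by
    have : (i : ℝ) ≤ k := by linarith [k.cast_nonneg (α := ℝ)]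
    exact_mod_cast this
  have hpow : (n : ℝ) ^ (-(0.3 : ℝ) * i) = ((n : ℝ) ^ (-(0.3 : ℝ))) ^ i := by
    rw [← Real.rpow_natCast, ← Real.rpow_mul (by positivity)]
  have hsmall : (k.choose i : ℝ) * 2 ^ i.choose 2 ≤
      ((n : ℝ) / (2 * k)) ^ i * (n : ℝ) ^ (-(0.3 : ℝ) * i) := calc
    (k.choose i : ℝ) * 2 ^ i.choose 2 ≤ (k : ℝ) ^ i * ((2 : ℝ) ^ ((k : ℝ) / 3)) ^ i := by
      gcongr
      · exact_mod_cast Nat.choose_le_pow k i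
      · exact two_pow_choose_two_le_rpow_pow (by linarith)
    _ = ((k : ℝ) * 2 ^ ((k : ℝ) / 3)) ^ i := (mul_pow _ _ _).symm
    _ ≤ ((n : ℝ) / (2 * k) * (n : ℝ) ^ (-(0.3 : ℝ))) ^ i :=
      pow_le_pow_left₀ (by positivity) h.mul_two_rpow_le i
    _ = ((n : ℝ) / (2 * k)) ^ i * (n : ℝ) ^ (-(0.3 : ℝ) * i) := by rw [mul_pow, hpow]
  calc (k.choose i : ℝ) * (n - k).choose (k - i) * 2 ^ i.choose 2
      = (n - k).choose (k - i) * (k.choose i * 2 ^ i.choose 2) := by ring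
    _ ≤ (n - k).choose (k - i) * (((n : ℝ) / (2 * k)) ^ i * (n : ℝ) ^ (-(0.3 : ℝ) * i)) := by
      gcongr
    _ = (n - k).choose (k - i) * ((n : ℝ) / (2 * k)) ^ i * (n : ℝ) ^ (-(0.3 : ℝ) * i) := by
      ring
    _ ≤ n.choose k * (n : ℝ) ^ (-(0.3 : ℝ) * i) := by
      gcongr
      exact choose_sub_mul_div_pow_le_choose (zero_lt_two.trans_le h.two_le) h.four_mul_le hik

theorem fi_le (h : IsTwoLogScale n k) {i : ℕ} (hi : (i : ℝ) ≤ 2 * k / 3) :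
    fi n k i ≤ f n k ^ 2 * (n : ℝ) ^ (-(0.3 : ℝ) * i) := by
  rw [fi_eq_choose_mul, f_sq_eq]
  calc (n.choose k : ℝ) * (k.choose i * (n - k).choose (k - i) * 2 ^ i.choose 2) *
        (2 : ℝ) ^ (-(2 * k.choose 2 : ℤ))
      ≤ n.choose k * (n.choose k * (n : ℝ) ^ (-(0.3 : ℝ) * i)) *
        (2 : ℝ) ^ (-(2 * k.choose 2 : ℤ)) := by
        gcongr (n.choose k : ℝ) * ?_ * _
        exact h.choose_mul_choose_mul_two_pow_le hi
    _ = _ := by ring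

theorem mul_le_two_pow_mul_rpow (h : IsTwoLogScale n k) {j : ℕ} (hj : (j : ℝ) ≤ k / 3) :
    (k : ℝ) * n ≤ 2 ^ (k - j) * (n : ℝ) ^ (-(0.3 : ℝ)) := by
  have hn : (0 : ℝ) < n := zero_lt_one.trans_le h.one_le
  have hjk : j ≤ k := by
    have : (j : ℝ) ≤ k := by linarith [k.cast_nonneg (α := ℝ)]
    exact_mod_cast this
  have hsplit : (n : ℝ) = (n : ℝ) ^ (1.3 : ℝ) * (n : ℝ) ^ (-(0.3 : ℝ)) := by
    rw [← Real.rpow_add hn]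
    norm_num
  have hpow : (k : ℝ) * (n : ℝ) ^ (1.3 : ℝ) ≤ 2 ^ (k - j) := calc
    (k : ℝ) * (n : ℝ) ^ (1.3 : ℝ) ≤ (n : ℝ) ^ (0.02 : ℝ) * (n : ℝ) ^ (1.3 : ℝ) := by
      gcongr
      exact h.le_rpow
    _ = ((n : ℝ) ^ (1.98 : ℝ)) ^ (2 / 3 : ℝ) := by
      rw [← Real.rpow_add hn, ← Real.rpow_mul hn.le]
      norm_num
    _ ≤ ((2 : ℝ) ^ k) ^ (2 / 3 : ℝ) := by
      gcongr
      exact h.rpow_le_two_pow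
    _ = (2 : ℝ) ^ (2 / 3 * k : ℝ) := by
      rw [← Real.rpow_natCast, ← Real.rpow_mul zero_le_two, mul_comm]
    _ ≤ (2 : ℝ) ^ ((k - j : ℕ) : ℝ) := by
      apply Real.rpow_le_rpow_of_exponent_le one_le_two
      rw [Nat.cast_sub hjk]
      linarith
    _ = 2 ^ (k - j) := Real.rpow_natCast 2 (k - j)
  calc (k : ℝ) * n = (k * (n : ℝ) ^ (1.3 : ℝ)) * (n : ℝ) ^ (-(0.3 : ℝ)) := by
        rw [mul_assoc, ← hsplit]
    _ ≤ 2 ^ (k - j) * (n : ℝ) ^ (-(0.3 : ℝ)) := by gcongr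

theorem choose_mul_choose_div_two_pow_le (h : IsTwoLogScale n k) {j : ℕ}
    (hj : (j : ℝ) ≤ k / 3) :
    (k.choose j : ℝ) * (n - k).choose j / 2 ^ ((k - j) * j + j.choose 2) ≤
      (n : ℝ) ^ (-(0.3 : ℝ) * j) := by
  have hn : (0 : ℝ) < n := zero_lt_one.trans_le h.one_le
  have hchoose : (k.choose j : ℝ) * (n - k).choose j ≤ ((k : ℝ) * n) ^ j := by
    rw [mul_pow]
    gcongr
    · exact_mod_cast Nat.choose_le_pow k j
    · exact_mod_cast (Nat.choose_le_pow (n - k) j).trans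
        (Nat.pow_le_pow_left (Nat.sub_le n k) j)
  calc (k.choose j : ℝ) * (n - k).choose j / 2 ^ ((k - j) * j + j.choose 2)
      ≤ ((k : ℝ) * n) ^ j / 2 ^ ((k - j) * j) := by
        gcongr
        · exact one_le_two
        · exact Nat.le_add_right _ _
    _ ≤ ((2 : ℝ) ^ (k - j) * (n : ℝ) ^ (-(0.3 : ℝ))) ^ j / 2 ^ ((k - j) * j) :=
        div_le_div_of_nonneg_right
          (pow_le_pow_left₀ (by positivity) (h.mul_le_two_pow_mul_rpow hj) j) (by positivity)
    _ = (n : ℝ) ^ (-(0.3 : ℝ) * j) := by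
        rw [mul_pow, ← pow_mul, ← Real.rpow_natCast _ j, ← Real.rpow_mul hn.le]
        field_simp

theorem fi_sub_le (h : IsTwoLogScale n k) {j : ℕ} (hj : (j : ℝ) ≤ k / 3) :
    fi n k (k - j) ≤ f n k * (n : ℝ) ^ (-(0.3 : ℝ) * j) := by
  have hjk : j ≤ k := by
    have : (j : ℝ) ≤ k := by linarith [k.cast_nonneg (α := ℝ)]
    exact_mod_cast this
  rw [fi_sub_eq hjk]
  exact mul_le_mul_of_nonneg_left (h.choose_mul_choose_div_two_pow_le hj) (f_nonneg n k)

theorem fi_le_of_mem_Icc (h : IsTwoLogScale n k) {i : ℕ} (hi : i ∈ Icc 2 (k - 1)) :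
    fi n k i ≤ (f n k ^ 2 + f n k) * (n : ℝ) ^ (-(0.3 : ℝ)) := by
  obtain ⟨hi₂, hik⟩ := mem_Icc.mp hi
  have hf := f_nonneg n k
  have hn := h.one_le
  rw [add_mul]
  by_cases hsmall : (i : ℝ) ≤ 2 * k / 3
  · have hexp : (n : ℝ) ^ (-(0.3 : ℝ) * i) ≤ (n : ℝ) ^ (-(0.3 : ℝ)) := by
      apply Real.rpow_le_rpow_of_exponent_le hn
      have : (2 : ℝ) ≤ i := by exact_mod_cast hi₂
      linarith
    calc fi n k i ≤ f n k ^ 2 * (n : ℝ) ^ (-(0.3 : ℝ) * i) := h.fi_le hsmall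
      _ ≤ f n k ^ 2 * (n : ℝ) ^ (-(0.3 : ℝ)) := by gcongr
      _ ≤ _ := le_add_of_nonneg_right (by positivity)
  · have hj : ((k - i : ℕ) : ℝ) ≤ k / 3 := by
      rw [Nat.cast_sub (by omega)]
      linarith
    have hexp : (n : ℝ) ^ (-(0.3 : ℝ) * (k - i : ℕ)) ≤ (n : ℝ) ^ (-(0.3 : ℝ)) := by
      apply Real.rpow_le_rpow_of_exponent_le hn
      have : (1 : ℝ) ≤ (k - i : ℕ) := by exact_mod_cast (by omega : 1 ≤ k - i)
      linarith
    calc fi n k i = fi n k (k - (k - i)) := by rw [Nat.sub_sub_self (by omega)]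
      _ ≤ f n k * (n : ℝ) ^ (-(0.3 : ℝ) * (k - i : ℕ)) := h.fi_sub_le hj
      _ ≤ f n k * (n : ℝ) ^ (-(0.3 : ℝ)) := by gcongr
      _ ≤ _ := le_add_of_nonneg_left (by positivity)

theorem sum_fi_le (h : IsTwoLogScale n k) {c0 : ℝ} (hc0 : 0 < c0) (hf : c0 ≤ f n k) :
    ∑ i ∈ Icc 2 (k - 1), fi n k i ≤ (1 + c0⁻¹) * (n : ℝ) ^ (-(0.28 : ℝ)) * f n k ^ 2 := by
  have hn : (0 : ℝ) < n := zero_lt_one.trans_le h.one_le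
  have hf₀ := f_nonneg n k
  have hf_le : f n k ≤ c0⁻¹ * f n k ^ 2 := by
    rw [sq, ← mul_assoc, le_mul_iff_one_le_left (hc0.trans_le hf), inv_mul_eq_div,
      one_le_div hc0]
    exact hf
  have hcard : ((Icc 2 (k - 1)).card : ℝ) ≤ (n : ℝ) ^ (0.02 : ℝ) := by
    refine le_trans ?_ h.le_rpow
    exact_mod_cast (Nat.card_Icc 2 (k - 1)).trans_le (by omega)
  calc ∑ i ∈ Icc 2 (k - 1), fi n k i
      ≤ (Icc 2 (k - 1)).card • ((f n k ^ 2 + f n k) * (n : ℝ) ^ (-(0.3 : ℝ))) :=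
        sum_le_card_nsmul _ _ _ fun i hi => h.fi_le_of_mem_Icc hi
    _ ≤ (n : ℝ) ^ (0.02 : ℝ) * ((f n k ^ 2 + c0⁻¹ * f n k ^ 2) * (n : ℝ) ^ (-(0.3 : ℝ))) := by
        rw [nsmul_eq_mul]
        gcongr
    _ = (1 + c0⁻¹) * ((n : ℝ) ^ (0.02 : ℝ) * (n : ℝ) ^ (-(0.3 : ℝ))) * f n k ^ 2 := by ring
    _ = (1 + c0⁻¹) * (n : ℝ) ^ (-(0.28 : ℝ)) * f n k ^ 2 := by
        rw [← Real.rpow_add hn]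
        norm_num

end IsTwoLogScale

theorem bernoulliBool_singleton_false (p : ℝ) : bernoulliBool p {false} = (1 - p).toNNReal := by
  simp [bernoulliBool]

theorem isProbabilityMeasure_bernoulliBool {p : ℝ} (h0 : 0 ≤ p) (h1 : p ≤ 1) :
    IsProbabilityMeasure (bernoulliBool p) := by
  constructor
  rw [bernoulliBool, Measure.add_apply, Measure.smul_apply, Measure.smul_apply,
    measure_univ, measure_univ, ENNReal.smul_def, ENNReal.smul_def, smul_eq_mul, smul_eq_mul,
    mul_one, mul_one, ← ENNReal.coe_add, ← Real.toNNReal_add h0 (by linarith)]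
  simp

theorem isProbabilityMeasure_erdosRenyi (n : ℕ) {p : ℝ} (h0 : 0 ≤ p) (h1 : p ≤ 1) :
    IsProbabilityMeasure (erdosRenyi n p) := by
  have := isProbabilityMeasure_bernoulliBool h0 h1
  unfold erdosRenyi
  infer_instance

instance (n : ℕ) : IsProbabilityMeasure (erdosRenyi n (1 / 2)) :=
  isProbabilityMeasure_erdosRenyi n (by norm_num) (by norm_num)

def absentOn {ι : Type*} (E : Finset ι) : Set (ι → Bool) := {ω | ∀ e ∈ E, ω e = false}

theorem indicator_absentOn_union {ι : Type*} [DecidableEq ι] (E F : Finset ι) (ω : ι → Bool) :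
    ((absentOn (E ∪ F)).indicator 1 ω : ℝ) =
      (absentOn E).indicator 1 ω * (absentOn F).indicator 1 ω := by
  have : absentOn (E ∪ F) = absentOn E ∩ absentOn F := by
    ext ω
    simp [absentOn, or_imp, forall_and]
  rw [this, Set.inter_indicator_one, Pi.mul_apply]

theorem measurableSet_absentOn {ι : Type*} (E : Finset ι) : MeasurableSet (absentOn E) := by
  have : absentOn E = ⋂ e ∈ (E : Set ι), (fun ω => ω e) ⁻¹' {false} := by
    ext ω
    simp [absentOn]
  rw [this]
  exact MeasurableSet.biInter E.countable_toSet fun e _ =>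
    measurable_pi_apply e (measurableSet_singleton false)

theorem pi_bernoulliBool_absentOn {ι : Type*} [Fintype ι] {p : ℝ} (h0 : 0 ≤ p) (h1 : p ≤ 1)
    (E : Finset ι) :
    Measure.pi (fun _ : ι => bernoulliBool p) (absentOn E) = (1 - p).toNNReal ^ #E := by
  classical
  have := isProbabilityMeasure_bernoulliBool h0 h1
  have hpi : absentOn E = Set.univ.pi fun e => if e ∈ E then {false} else Set.univ := by
    ext ω
    simp only [absentOn, Set.mem_ofPred_eq, Set.mem_pi, Set.mem_univ, true_implies]
    refine ⟨fun h e => ?_, fun h e he => by simpa [he] using h e⟩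
    split_ifs with he
    exacts [h e he, trivial]
  rw [hpi, Measure.pi_pi]
  simp only [apply_ite, measure_univ, bernoulliBool_singleton_false]
  rw [prod_ite_mem, univ_inter, prod_const]

def pairsIn {V : Type*} [DecidableEq V] (S : Finset V) : Finset (Sym2 V) :=
  S.offDiag.image Sym2.mk.uncurry

section pairsIn

variable {V : Type*} [DecidableEq V]

theorem card_pairsIn (S : Finset V) : #(pairsIn S) = (#S).choose 2 := Sym2.card_image_offDiag S

theorem mk_mem_pairsIn {S : Finset V} {a b : V} : s(a, b) ∈ pairsIn S ↔ a ∈ S ∧ b ∈ S ∧ a ≠ b := by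
  unfold pairsIn
  aesop

theorem pairsIn_inter_subset (S T : Finset V) : pairsIn S ∩ pairsIn T ⊆ pairsIn (S ∩ T) := by
  intro e
  induction e using Sym2.ind with
  | h a b =>
    simp only [mem_inter, mk_mem_pairsIn]
    tauto

theorem two_mul_choose_two_le_card_pairsIn_union {S T : Finset V} {k : ℕ} (hS : #S = k)
    (hT : #T = k) : 2 * k.choose 2 ≤ #(pairsIn S ∪ pairsIn T) + (#(S ∩ T)).choose 2 := by
  have hinter : #(pairsIn S ∩ pairsIn T) ≤ (#(S ∩ T)).choose 2 :=
    card_pairsIn (S ∩ T) ▸ card_le_card (pairsIn_inter_subset S T)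
  have := card_union_add_card_inter (pairsIn S) (pairsIn T)
  rw [card_pairsIn, card_pairsIn, hS, hT] at this
  omega

end pairsIn

theorem isIndepFinset_graphOf_iff {n : ℕ} (ω : Sym2 (Fin n) → Bool) (S : Finset (Fin n)) :
    IsIndepFinset (graphOf n ω) S ↔ ω ∈ absentOn (pairsIn S) := by
  simp only [IsIndepFinset, absentOn, Set.mem_ofPred_eq, graphOf, SimpleGraph.fromEdgeSet_adj,
    not_and, not_not]
  constructor
  · intro h e he
    induction e using Sym2.ind with
    | h a b =>
      obtain ⟨ha, hb, hab⟩ := mk_mem_pairsIn.mp he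
      simpa using mt (h a ha b hb) hab
  · intro h a ha b hb hω
    by_contra hab
    simp [h _ (mk_mem_pairsIn.mpr ⟨ha, hb, hab⟩)] at hω

section Counting

variable {α : Type*} [Fintype α] [DecidableEq α]

theorem card_filter_card_inter_eq_le (S : Finset α) (k i : ℕ) :
    #{T ∈ powersetCard k univ | #(S ∩ T) = i} ≤
      (#S).choose i * (Fintype.card α - #S).choose (k - i) := by
  rw [← card_powersetCard, ← card_compl, ← card_powersetCard, ← card_product]
  apply card_le_card_of_injOn fun T => (S ∩ T, T \ S)
  · intro T hT
    obtain ⟨hTk, hTi⟩ := mem_filter.mp hT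
    have hsplit := card_inter_add_card_sdiff T S
    rw [(mem_powersetCard.mp hTk).2, inter_comm, hTi] at hsplit
    simp only [coe_product, Set.mem_prod, mem_coe, mem_powersetCard]
    refine ⟨⟨inter_subset_left, hTi⟩, fun x hx => ?_, by omega⟩
    simpa using (mem_sdiff.mp hx).2
  · intro T₁ _ T₂ _ h
    simp only [Prod.mk.injEq] at h
    rw [← sdiff_union_inter T₁ S, ← sdiff_union_inter T₂ S, inter_comm T₁, inter_comm T₂, h.1,
      h.2]

theorem sum_powersetCard_comp_card_inter_le (S : Finset α) (k : ℕ) {g : ℕ → ℝ}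
    (hg : ∀ i, 0 ≤ g i) : ∑ T ∈ powersetCard k univ, g #(S ∩ T) ≤
      ∑ i ∈ range (k + 1), (#S).choose i * (Fintype.card α - #S).choose (k - i) * g i := by
  rw [← sum_fiberwise_of_maps_to (g := fun T => #(S ∩ T)) (t := range (k + 1))]
  · gcongr with i
    rw [sum_congr rfl fun T hT => congrArg g (mem_filter.mp hT).2, sum_const, nsmul_eq_mul]
    gcongr
    · exact hg i
    · exact_mod_cast card_filter_card_inter_eq_le S k i
  · intro T hT
    rw [mem_range, Nat.lt_succ_iff, ← (mem_powersetCard.mp hT).2]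
    exact card_le_card inter_subset_right

end Counting

theorem integral_indicator_absentOn {n : ℕ} (E : Finset (Sym2 (Fin n))) :
    ∫ ω, ((absentOn E).indicator 1 ω : ℝ) ∂erdosRenyi n (1 / 2) = 2 ^ (-(#E : ℤ)) := by
  rw [integral_indicator_one (measurableSet_absentOn E), measureReal_def, erdosRenyi,
    pi_bernoulliBool_absentOn (by norm_num) (by norm_num)]
  norm_num
  rw [one_div, inv_pow]

theorem numIndep_eq_sum (n k : ℕ) (ω : Sym2 (Fin n) → Bool) : (numIndep n k ω : ℝ) =
    ∑ S ∈ powersetCard k (univ : Finset (Fin n)), ((absentOn (pairsIn S)).indicator 1 ω : ℝ) := by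
  classical
  have : {S : Finset (Fin n) | #S = k ∧ IsIndepFinset (graphOf n ω) S} =
      ↑{S ∈ powersetCard k (univ : Finset (Fin n)) | ω ∈ absentOn (pairsIn S)} := by
    ext S
    simp [isIndepFinset_graphOf_iff]
  rw [numIndep, this, Set.ncard_coe_finset, card_filter]
  push_cast
  simp [Set.indicator_apply]

theorem integral_numIndep (n k : ℕ) :
    ∫ ω, (numIndep n k ω : ℝ) ∂erdosRenyi n (1 / 2) = f n k := by
  simp_rw [numIndep_eq_sum]
  rw [integral_finsetSum _ fun _ _ => Integrable.of_finite (μ := erdosRenyi n (1 / 2))]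
  rw [sum_congr rfl fun S hS => by
    rw [integral_indicator_absentOn, card_pairsIn, (mem_powersetCard.mp hS).2]]
  rw [sum_const, card_powersetCard, card_univ, Fintype.card_fin, nsmul_eq_mul, f]

theorem integral_numIndep_sq (n k : ℕ) :
    ∫ ω, (numIndep n k ω : ℝ) ^ 2 ∂erdosRenyi n (1 / 2) =
      ∑ S ∈ powersetCard k (univ : Finset (Fin n)), ∑ T ∈ powersetCard k univ,
        (2 : ℝ) ^ (-(#(pairsIn S ∪ pairsIn T) : ℤ)) := by
  simp_rw [numIndep_eq_sum, sq, sum_mul_sum, ← indicator_absentOn_union]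
  rw [integral_finsetSum _ fun _ _ => Integrable.of_finite (μ := erdosRenyi n (1 / 2))]
  refine sum_congr rfl fun S _ => ?_
  rw [integral_finsetSum _ fun _ _ => Integrable.of_finite (μ := erdosRenyi n (1 / 2))]
  exact sum_congr rfl fun T _ => integral_indicator_absentOn _

theorem variance_numIndep_eq (n k : ℕ) :
    variance (fun ω => (numIndep n k ω : ℝ)) (erdosRenyi n (1 / 2)) =
      ∑ S ∈ powersetCard k (univ : Finset (Fin n)), ∑ T ∈ powersetCard k univ,
        ((2 : ℝ) ^ (-(#(pairsIn S ∪ pairsIn T) : ℤ)) - 2 ^ (-(2 * k.choose 2 : ℤ))) := by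
  rw [variance_eq_sub MemLp.of_discrete]
  simp only [Pi.pow_apply]
  rw [integral_numIndep_sq, integral_numIndep, f_sq_eq]
  simp only [sum_sub_distrib, sum_const, card_powersetCard, card_univ, Fintype.card_fin,
    nsmul_eq_mul]
  ring

/-- `Cov(X_K, X_{K'})` for `k`-sets `K`, `K'` with `|K ∩ K'| = i`. -/
noncomputable def pairCov (k i : ℕ) : ℝ :=
  2 ^ (-(2 * k.choose 2 : ℤ) + i.choose 2) - 2 ^ (-(2 * k.choose 2 : ℤ))

theorem pairCov_nonneg (k i : ℕ) : 0 ≤ pairCov k i :=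
  sub_nonneg.mpr <| zpow_le_zpow_right₀ one_le_two (by omega)

theorem pairCov_of_lt_two {k i : ℕ} (hi : i < 2) : pairCov k i = 0 := by
  simp [pairCov, Nat.choose_eq_zero_of_lt hi]

theorem pairCov_le (k i : ℕ) : pairCov k i ≤ 2 ^ (-(2 * k.choose 2 : ℤ) + i.choose 2) :=
  sub_le_self _ (by positivity)

theorem two_zpow_sub_le_pairCov {n k : ℕ} {S T : Finset (Fin n)} (hS : #S = k) (hT : #T = k) :
    (2 : ℝ) ^ (-(#(pairsIn S ∪ pairsIn T) : ℤ)) - 2 ^ (-(2 * k.choose 2 : ℤ)) ≤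
      pairCov k #(S ∩ T) := by
  have := two_mul_choose_two_le_card_pairsIn_union hS hT
  exact sub_le_sub_right (zpow_le_zpow_right₀ one_le_two (by omega)) _

theorem choose_mul_sum_pairCov_le {k : ℕ} (hk : 2 ≤ k) (n : ℕ) :
    n.choose k * ∑ i ∈ range (k + 1), k.choose i * (n - k).choose (k - i) * pairCov k i ≤
      f n k + ∑ i ∈ Icc 2 (k - 1), fi n k i := by
  have hlow : ∑ i ∈ range 2, (k.choose i * (n - k).choose (k - i) * pairCov k i : ℝ) = 0 :=
    sum_eq_zero fun i hi => by rw [pairCov_of_lt_two (mem_range.mp hi), mul_zero]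
  have htop : (n.choose k : ℝ) * (k.choose k * (n - k).choose (k - k) * pairCov k k) ≤ f n k := by
    have hk : pairCov k k ≤ 2 ^ (-(k.choose 2 : ℤ)) :=
      (pairCov_le k k).trans_eq (by congr 1; ring)
    simpa [f] using mul_le_mul_of_nonneg_left hk (n.choose k).cast_nonneg
  rw [sum_range_succ, ← sum_range_add_sum_Ico _ hk, hlow, zero_add, mul_add, add_comm,
    ← Icc_sub_one_right_eq_Ico_of_not_isMin (by simp; omega), mul_sum]
  gcongr with i
  rw [fi]
  have := pairCov_le k i
  calc (n.choose k : ℝ) * (k.choose i * (n - k).choose (k - i) * pairCov k i)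
      ≤ n.choose k * (k.choose i * (n - k).choose (k - i) *
        2 ^ (-(2 * k.choose 2 : ℤ) + i.choose 2)) := by gcongr
    _ = _ := by ring

theorem variance_numIndep_le {k : ℕ} (hk : 2 ≤ k) (n : ℕ) :
    variance (fun ω => (numIndep n k ω : ℝ)) (erdosRenyi n (1 / 2)) ≤
      f n k + ∑ i ∈ Icc 2 (k - 1), fi n k i := calc
  _ = ∑ S ∈ powersetCard k (univ : Finset (Fin n)), ∑ T ∈ powersetCard k univ,
        ((2 : ℝ) ^ (-(#(pairsIn S ∪ pairsIn T) : ℤ)) - 2 ^ (-(2 * k.choose 2 : ℤ))) :=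
      variance_numIndep_eq n k
  _ ≤ ∑ S ∈ powersetCard k (univ : Finset (Fin n)), ∑ T ∈ powersetCard k univ,
        pairCov k #(S ∩ T) := by
      gcongr with S hS T hT
      exact two_zpow_sub_le_pairCov (mem_powersetCard.mp hS).2 (mem_powersetCard.mp hT).2
  _ ≤ ∑ _S ∈ powersetCard k (univ : Finset (Fin n)),
        ∑ i ∈ range (k + 1), k.choose i * (n - k).choose (k - i) * pairCov k i := by
      gcongr with S hS
      have := sum_powersetCard_comp_card_inter_le S k (pairCov_nonneg k)
      rwa [(mem_powersetCard.mp hS).2, Fintype.card_fin] at this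
  _ = n.choose k * ∑ i ∈ range (k + 1), k.choose i * (n - k).choose (k - i) * pairCov k i := by
      rw [sum_const, card_powersetCard, card_univ, Fintype.card_fin, nsmul_eq_mul]
  _ ≤ f n k + ∑ i ∈ Icc 2 (k - 1), fi n k i := choose_mul_sum_pairCov_le hk n

/-- Lemma 2.1: bounds on `f_i` for `k = (1+o(1))·2log₂ n`, and the resulting
variance bound for the number `X` of independent sets of size `k` in `G(n,1/2)`. -/
theorem fi_bounds_and_variance :
    ∃ δ : ℝ, 0 < δ ∧
      (∃ N : ℕ, ∀ n : ℕ, N ≤ n → ∀ k : ℕ,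
        (1 - δ) * (2 * Real.logb 2 n) ≤ (k : ℝ) →
        (k : ℝ) ≤ (1 + δ) * (2 * Real.logb 2 n) →
        (∀ i : ℕ, 2 ≤ i → (i : ℝ) ≤ 2 * k / 3 →
          fi n k i ≤ f n k ^ 2 * (n : ℝ) ^ (-(0.3 : ℝ) * i)) ∧
        (∀ j : ℕ, 1 ≤ j → (j : ℝ) ≤ (k : ℝ) / 3 →
          fi n k (k - j) ≤ f n k * (n : ℝ) ^ (-(0.3 : ℝ) * j))) ∧
      (∀ ε : ℝ, 0 < ε → ∀ c0 : ℝ, 0 < c0 → ∃ N' : ℕ, ∀ n : ℕ, N' ≤ n → ∀ k : ℕ,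
        (1 - δ) * (2 * Real.logb 2 n) ≤ (k : ℝ) →
        (k : ℝ) ≤ (1 + δ) * (2 * Real.logb 2 n) →
        c0 ≤ f n k →
        (∑ i ∈ Finset.Icc 2 (k - 1), fi n k i) ≤ ε * f n k ^ 2 ∧
        variance (fun ω => (numIndep n k ω : ℝ)) (erdosRenyi n (1/2)) ≤
          (∫ ω, (numIndep n k ω : ℝ) ∂ erdosRenyi n (1/2)) +
            ε * (∫ ω, (numIndep n k ω : ℝ) ∂ erdosRenyi n (1/2)) ^ 2) := by
  refine ⟨1 / 100, by norm_num, ?_, fun ε hε c0 hc0 => ?_⟩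
  · obtain ⟨N, hN⟩ := eventually_atTop.mp eventually_isTwoLogScale
    exact ⟨N, fun n hn k hk₁ hk₂ => ⟨fun i _ hi => (hN n hn k hk₁ hk₂).fi_le hi,
      fun j _ hj => (hN n hn k hk₁ hk₂).fi_sub_le hj⟩⟩
  have hdecay : ∀ᶠ n : ℕ in atTop, (1 + c0⁻¹) * (n : ℝ) ^ (-(0.28 : ℝ)) < ε := by
    have := ((tendsto_rpow_neg_atTop (by norm_num : (0 : ℝ) < 0.28)).comp
      tendsto_natCast_atTop_atTop).const_mul (1 + c0⁻¹)
    rw [mul_zero] at this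
    exact this.eventually (gt_mem_nhds hε)
  obtain ⟨N, hN⟩ := eventually_atTop.mp (eventually_isTwoLogScale.and hdecay)
  refine ⟨N, fun n hn k hk₁ hk₂ hf => ?_⟩
  have h := (hN n hn).1 k hk₁ hk₂
  have hsum : ∑ i ∈ Icc 2 (k - 1), fi n k i ≤ ε * f n k ^ 2 :=
    (h.sum_fi_le hc0 hf).trans (by gcongr; exact (hN n hn).2.le)
  refine ⟨hsum, ?_⟩
  rw [integral_numIndep]
  linarith [variance_numIndep_le h.two_le n]

end RandomBipartiteDecomposition
end

section
/- For every finite simple graph G = (V,E) there exists a subset U ⊆ V such that τ(G) = |V| − |U| + τ'(G[U]), where G[U] denotes the subgraph of G induced on U. -/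
open MeasureTheory ProbabilityTheory Filter Real

namespace RandomBipartiteDecomposition

/-!
Upper bound, for every `U`: the stars centred at the vertices outside `U`, where an edge between
two such vertices goes to the star of its endpoint of lower rank, together with a nontrivial
decomposition of `G[U]` decompose `G`; hence `τ(G) ≤ |V| - |U| + τ'(G[U])`.

Lower bound, for a suitable `U`: fix a decomposition of `G` into `τ(G)` bicliques and cut every
piece down to `U`. Take `U` as small as possible with `|V| - |U| + #(surviving pieces) ≤ τ(G)`.
If a class of a surviving piece met `U` in a single vertex, deleting that vertex from `U` would
kill the piece, so a smaller `U` would do. Hence every surviving piece is nontrivial, and the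
surviving pieces decompose `G[U]`, giving `τ'(G[U]) ≤ τ(G) - (|V| - |U|)`.
-/

open Finset

section Partition

variable {V W ι κ : Type*}

lemma bicliqueEdges_subset_edgeSet {G : SimpleGraph V} {A B : Finset V}
    (h : ∀ a ∈ A, ∀ b ∈ B, G.Adj a b) : bicliqueEdges A B ⊆ G.edgeSet := by
  rintro _ ⟨a, ha, b, hb, rfl⟩
  exact h a ha b hb

lemma bicliqueEdges_eq_empty_of_not_nonempty {A B : Finset V}
    (h : ¬ (A.Nonempty ∧ B.Nonempty)) : bicliqueEdges A B = ∅ := by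
  rw [Set.eq_empty_iff_forall_notMem]
  rintro _ ⟨a, ha, b, hb, -⟩
  exact h ⟨⟨a, ha⟩, ⟨b, hb⟩⟩

lemma bicliqueEdges_map (f : V ↪ W) (A B : Finset V) :
    bicliqueEdges (A.map f) (B.map f) = Sym2.map f '' bicliqueEdges A B := by
  ext e
  constructor
  · rintro ⟨_, ha', _, hb', rfl⟩
    obtain ⟨a, ha, rfl⟩ := mem_map.mp ha'
    obtain ⟨b, hb, rfl⟩ := mem_map.mp hb'
    exact ⟨s(a, b), ⟨a, ha, b, hb, rfl⟩, rfl⟩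
  · rintro ⟨_, ⟨a, ha, b, hb, rfl⟩, rfl⟩
    exact ⟨f a, mem_map_of_mem f ha, f b, mem_map_of_mem f hb, rfl⟩

lemma mem_bicliqueEdges_subtype {p : V → Prop} [DecidablePred p] {A B : Finset V}
    {e : Sym2 (Subtype p)} :
    e ∈ bicliqueEdges (A.subtype p) (B.subtype p) ↔
      e.map Subtype.val ∈ bicliqueEdges A B := by
  induction e with | _ x y
  constructor
  · rintro ⟨a, ha, b, hb, he⟩
    exact ⟨a, mem_subtype.mp ha, b, mem_subtype.mp hb, by rw [he]; rfl⟩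
  · rintro ⟨a, ha, b, hb, he⟩
    rcases Sym2.eq_iff.mp he with ⟨rfl, rfl⟩ | ⟨rfl, rfl⟩
    · exact ⟨x, mem_subtype.mpr ha, y, mem_subtype.mpr hb, rfl⟩
    · exact ⟨y, mem_subtype.mpr ha, x, mem_subtype.mpr hb, Sym2.eq_swap⟩

/-- Unlike `IsBicliqueDecomp`, pieces may be empty and the index type is arbitrary; the classes
of a piece are disjoint automatically since `G` is loopless. -/
structure IsBicliquePartition (G : SimpleGraph V) (P : ι → Finset V × Finset V) : Prop where
  adj : ∀ i, ∀ a ∈ (P i).1, ∀ b ∈ (P i).2, G.Adj a b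
  pairwise_disjoint :
    Pairwise fun i j => Disjoint (bicliqueEdges (P i).1 (P i).2) (bicliqueEdges (P j).1 (P j).2)
  iUnion_eq : ⋃ i, bicliqueEdges (P i).1 (P i).2 = G.edgeSet

def nonemptyIndices [Fintype ι] (P : ι → Finset V × Finset V) : Finset ι :=
  univ.filter fun i => (P i).1.Nonempty ∧ (P i).2.Nonempty

lemma mem_nonemptyIndices [Fintype ι] {P : ι → Finset V × Finset V} {i : ι} :
    i ∈ nonemptyIndices P ↔ (P i).1.Nonempty ∧ (P i).2.Nonempty := by
  simp [nonemptyIndices]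

noncomputable def nonemptyPieces [Fintype ι] (P : ι → Finset V × Finset V)
    (k : Fin #(nonemptyIndices P)) : Finset V × Finset V :=
  P ((nonemptyIndices P).equivFin.symm k)

variable {G H : SimpleGraph V} {P : ι → Finset V × Finset V} {Q : κ → Finset V × Finset V}

lemma IsBicliqueDecomp.isBicliquePartition {m : ℕ} {P : Fin m → Finset V × Finset V}
    (h : IsBicliqueDecomp G m P) : IsBicliquePartition G P :=
  ⟨fun i => (h.1 i).2.2.2, fun _ _ => h.2.1 _ _, h.2.2⟩

lemma IsNontrivialBicliqueDecomp.isBicliquePartition {m : ℕ} {P : Fin m → Finset V × Finset V}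
    (h : IsNontrivialBicliqueDecomp G m P) : IsBicliquePartition G P :=
  ⟨fun i => (h.1 i).2.2.2, fun _ _ => h.2.1 _ _, h.2.2⟩

namespace IsBicliquePartition

lemma isBicliqueIn (h : IsBicliquePartition G P) {i : ι} (hA : (P i).1.Nonempty)
    (hB : (P i).2.Nonempty) : IsBicliqueIn G (P i).1 (P i).2 :=
  ⟨hA, hB, disjoint_left.mpr fun a ha hb => (h.adj i a ha a hb).ne rfl, h.adj i⟩

lemma comp (h : IsBicliquePartition G P) {e : κ → ι} (he : Function.Injective e)
    (hrange : ∀ i, (P i).1.Nonempty → (P i).2.Nonempty → i ∈ Set.range e) :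
    IsBicliquePartition G (P ∘ e) where
  adj k := h.adj (e k)
  pairwise_disjoint _ _ hkl := h.pairwise_disjoint (he.ne hkl)
  iUnion_eq := by
    refine (Set.iUnion_subset fun k => ?_).antisymm ?_
    · exact h.iUnion_eq ▸ Set.subset_iUnion (fun i => bicliqueEdges (P i).1 (P i).2) (e k)
    · rw [← h.iUnion_eq]
      refine Set.iUnion_subset fun i x hx => ?_
      by_cases hi : (P i).1.Nonempty ∧ (P i).2.Nonempty
      · obtain ⟨k, rfl⟩ := hrange i hi.1 hi.2
        exact Set.mem_iUnion.mpr ⟨k, hx⟩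
      · rw [bicliqueEdges_eq_empty_of_not_nonempty hi] at hx
        exact hx.elim

lemma map (h : IsBicliquePartition G P) (f : V ↪ W) :
    IsBicliquePartition (G.map f) fun i => ((P i).1.map f, (P i).2.map f) where
  adj i _ ha' _ hb' := by
    obtain ⟨a, ha, rfl⟩ := mem_map.mp ha'
    obtain ⟨b, hb, rfl⟩ := mem_map.mp hb'
    exact (SimpleGraph.map_adj_apply (f := f)).mpr (h.adj i a ha b hb)
  pairwise_disjoint i j hij := by
    simp only [bicliqueEdges_map]
    exact (Set.disjoint_image_iff (Sym2.map.injective f.injective)).mpr (h.pairwise_disjoint hij)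
  iUnion_eq := by
    simp only [bicliqueEdges_map, ← Set.image_iUnion, h.iUnion_eq, SimpleGraph.edgeSet_map]
    rfl

lemma sum (hP : IsBicliquePartition G P) (hQ : IsBicliquePartition H Q) (hGH : Disjoint G H) :
    IsBicliquePartition (G ⊔ H) (Sum.elim P Q) where
  adj
    | .inl i => fun a ha b hb => Or.inl (hP.adj i a ha b hb)
    | .inr i => fun a ha b hb => Or.inr (hQ.adj i a ha b hb)
  pairwise_disjoint := by
    have hdisj := SimpleGraph.disjoint_edgeSet.mpr hGH
    rintro (i | i) (j | j) hij
    · exact hP.pairwise_disjoint fun h => hij (congrArg _ h)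
    · exact hdisj.mono (bicliqueEdges_subset_edgeSet (hP.adj i))
        (bicliqueEdges_subset_edgeSet (hQ.adj j))
    · exact hdisj.symm.mono (bicliqueEdges_subset_edgeSet (hQ.adj i))
        (bicliqueEdges_subset_edgeSet (hP.adj j))
    · exact hQ.pairwise_disjoint fun h => hij (congrArg _ h)
  iUnion_eq := by
    rw [SimpleGraph.edgeSet_sup, ← hP.iUnion_eq, ← hQ.iUnion_eq, Set.iUnion_sum]
    rfl

lemma induce [DecidableEq V] (h : IsBicliquePartition G P) (U : Finset V) :
    IsBicliquePartition (G.induce (U : Set V))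
      fun i => ((P i).1.subtype (· ∈ U), (P i).2.subtype (· ∈ U)) where
  adj i a ha b hb := h.adj i a (mem_subtype.mp ha) b (mem_subtype.mp hb)
  pairwise_disjoint i j hij := Set.disjoint_left.mpr fun e hi hj =>
    Set.disjoint_left.mp (h.pairwise_disjoint hij) (mem_bicliqueEdges_subtype.mp hi)
      (mem_bicliqueEdges_subtype.mp hj)
  iUnion_eq := by
    ext e
    simp only [Set.mem_iUnion, mem_bicliqueEdges_subtype]
    rw [← Set.mem_iUnion (s := fun i => bicliqueEdges (P i).1 (P i).2), h.iUnion_eq]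
    induction e with | _ x y
    simp

variable [Fintype ι]

lemma comp_nonemptyPieces (h : IsBicliquePartition G P) :
    IsBicliquePartition G (nonemptyPieces P) :=
  h.comp (Subtype.val_injective.comp (nonemptyIndices P).equivFin.symm.injective) fun i hA hB =>
    ⟨(nonemptyIndices P).equivFin ⟨i, mem_nonemptyIndices.mpr ⟨hA, hB⟩⟩, by simp⟩

lemma isBicliqueDecomp (h : IsBicliquePartition G P) :
    IsBicliqueDecomp G #(nonemptyIndices P) (nonemptyPieces P) := by
  refine ⟨fun k => ?_, fun _ _ hkl => h.comp_nonemptyPieces.pairwise_disjoint hkl,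
    h.comp_nonemptyPieces.iUnion_eq⟩
  obtain ⟨hA, hB⟩ := mem_nonemptyIndices.mp ((nonemptyIndices P).equivFin.symm k).2
  exact h.comp_nonemptyPieces.isBicliqueIn hA hB

lemma isNontrivialBicliqueDecomp (h : IsBicliquePartition G P)
    (h2 : ∀ i ∈ nonemptyIndices P, 2 ≤ #(P i).1 ∧ 2 ≤ #(P i).2) :
    IsNontrivialBicliqueDecomp G #(nonemptyIndices P) (nonemptyPieces P) := by
  refine ⟨fun k => ?_, fun _ _ hkl => h.comp_nonemptyPieces.pairwise_disjoint hkl,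
    h.comp_nonemptyPieces.iUnion_eq⟩
  have hk := ((nonemptyIndices P).equivFin.symm k).2
  obtain ⟨hA, hB⟩ := mem_nonemptyIndices.mp hk
  exact ⟨(h2 _ hk).1, (h2 _ hk).2, (h.comp_nonemptyPieces.isBicliqueIn hA hB).2.2⟩

lemma tau_le_card (h : IsBicliquePartition G P) : tau G ≤ Fintype.card ι :=
  (Nat.sInf_le (s := {m | ∃ P : Fin m → Finset V × Finset V, IsBicliqueDecomp G m P})
    ⟨_, h.isBicliqueDecomp⟩).trans (card_le_univ _)

lemma tau'_le_card_nonemptyIndices (h : IsBicliquePartition G P)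
    (h2 : ∀ i ∈ nonemptyIndices P, 2 ≤ #(P i).1 ∧ 2 ≤ #(P i).2) :
    tau' G ≤ #(nonemptyIndices P) :=
  sInf_le ⟨_, rfl, _, h.isNontrivialBicliqueDecomp h2⟩

end IsBicliquePartition

end Partition

section Stars

variable {V : Type*}

lemma spanningCoe_induce_adj (G : SimpleGraph V) {U : Set V} {a b : V} :
    (G.induce U).spanningCoe.Adj a b ↔ a ∈ U ∧ b ∈ U ∧ G.Adj a b := by
  simp only [SimpleGraph.map_adj, SimpleGraph.comap_adj, Function.Embedding.subtype_apply]
  constructor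
  · rintro ⟨a, b, h, rfl, rfl⟩
    exact ⟨a.2, b.2, h⟩
  · rintro ⟨ha, hb, h⟩
    exact ⟨⟨a, ha⟩, ⟨b, hb⟩, h, rfl, rfl⟩

variable [DecidableEq V] [Fintype V] (G : SimpleGraph V) [DecidableRel G.Adj] (U : Finset V)
  {r : V → ℕ}

/-- The star at `w ∉ U` takes the edges from `w` into `U` and to the vertices outside `U` of
higher rank, so each edge leaving `U` lies in exactly one star. -/
def stars (r : V → ℕ) (w : {w // w ∉ U}) : Finset V × Finset V :=
  ({w.1}, univ.filter fun x => G.Adj w x ∧ (x ∈ U ∨ r w < r x))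

lemma stars_adj (w : {w // w ∉ U}) :
    ∀ a ∈ (stars G U r w).1, ∀ b ∈ (stars G U r w).2,
      (G \ (G.induce (U : Set V)).spanningCoe).Adj a b := by
  intro a ha b hb
  rw [mem_singleton.mp ha]
  rw [stars, mem_filter] at hb
  rw [SimpleGraph.sdiff_adj, spanningCoe_induce_adj]
  exact ⟨hb.2.1, fun h => w.2 h.1⟩

lemma mem_iUnion_stars {a b : V} (ha : a ∉ U) (hab : G.Adj a b) (hb : b ∈ U ∨ r a < r b) :
    s(a, b) ∈ ⋃ w, bicliqueEdges (stars G U r w).1 (stars G U r w).2 :=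
  Set.mem_iUnion.mpr ⟨⟨a, ha⟩, a, mem_singleton_self a, b, by simp [stars, hab, hb], rfl⟩

lemma isBicliquePartition_stars (hr : Function.Injective r) :
    IsBicliquePartition (G \ (G.induce (U : Set V)).spanningCoe) (stars G U r) where
  adj := stars_adj G U
  pairwise_disjoint w w' hww' := by
    refine Set.disjoint_left.mpr ?_
    rintro _ ⟨_, ha, b, hb, rfl⟩ ⟨_, ha', b', hb', he⟩
    rw [mem_singleton.mp ha, mem_singleton.mp ha'] at he
    simp only [stars, mem_filter, mem_univ, true_and] at hb hb'
    rcases Sym2.eq_iff.mp he with ⟨h, -⟩ | ⟨rfl, rfl⟩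
    · exact hww' (Subtype.ext h)
    · rcases hb.2, hb'.2 with ⟨h | h, h' | h'⟩
      exacts [w'.2 h, w'.2 h, w.2 h', by omega]
  iUnion_eq := by
    refine (Set.iUnion_subset fun w => bicliqueEdges_subset_edgeSet (stars_adj G U w)).antisymm ?_
    intro e hab
    induction e with | _ a b
    rw [SimpleGraph.mem_edgeSet, SimpleGraph.sdiff_adj, spanningCoe_induce_adj] at hab
    wlog ha : a ∉ U generalizing a b
    · rw [Sym2.eq_swap]
      exact this b a ⟨hab.1.symm, fun h => hab.2 ⟨h.2.1, h.1, h.2.2.symm⟩⟩ fun h => hab.2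
        ⟨not_not.mp ha, h, hab.1⟩
    by_cases hb : b ∈ U ∨ r a < r b
    · exact mem_iUnion_stars G U ha hab.1 hb
    · rw [not_or, not_lt] at hb
      have hrab : r b < r a := hb.2.lt_of_ne fun h => hab.1.ne (hr h).symm
      rw [Sym2.eq_swap]
      exact mem_iUnion_stars G U hb.1 hab.1.symm (Or.inr hrab)

end Stars

section UpperBound

variable {V κ : Type*} [DecidableEq V] [Fintype V] {G : SimpleGraph V} {U : Finset V}

lemma IsBicliquePartition.sum_stars [DecidableRel G.Adj]
    {Q : κ → Finset (U : Set V) × Finset (U : Set V)}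
    (hQ : IsBicliquePartition (G.induce (U : Set V)) Q) {r : V → ℕ}
    (hr : Function.Injective r) :
    IsBicliquePartition G (Sum.elim (stars G U r) fun i =>
      ((Q i).1.map (.subtype _), (Q i).2.map (.subtype _))) := by
  have h := (isBicliquePartition_stars G U hr).sum (hQ.map (Function.Embedding.subtype _))
    disjoint_sdiff_self_left
  rwa [sdiff_sup_cancel (G.spanningCoe_induce_le _)] at h

lemma tau_le_card_compl_add_card [Fintype κ] {Q : κ → Finset (U : Set V) × Finset (U : Set V)}
    (hQ : IsBicliquePartition (G.induce (U : Set V)) Q) : tau G ≤ #Uᶜ + Fintype.card κ := by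
  classical
  have h := (hQ.sum_stars (Fin.val_injective.comp (Fintype.equivFin V).injective)).tau_le_card
  simpa [Fintype.card_subtype_compl, card_compl] using h

lemma exists_isBicliqueDecomp_tau (G : SimpleGraph V) : ∃ P, IsBicliqueDecomp G (tau G) P := by
  classical
  have hempty : IsBicliquePartition (G.induce ((∅ : Finset V) : Set V))
      (isEmptyElim : Empty → Finset _ × Finset _) :=
    ⟨isEmptyElim, isEmptyElim, by ext ⟨⟨x, hx⟩, _⟩; simp at hx⟩
  have h := hempty.sum_stars (Fin.val_injective.comp (Fintype.equivFin V).injective)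
  exact Nat.sInf_mem (s := {m | ∃ P : Fin m → Finset V × Finset V, IsBicliqueDecomp G m P})
    ⟨_, _, h.isBicliqueDecomp⟩

lemma eq_top_or_exists_isNontrivialBicliqueDecomp_tau' {W : Type*} (H : SimpleGraph W) :
    tau' H = ⊤ ∨ ∃ k Q, IsNontrivialBicliqueDecomp H k Q ∧ tau' H = k := by
  rcases Set.eq_empty_or_nonempty {t : ℕ∞ | ∃ m : ℕ, t = m ∧
      ∃ P : Fin m → Finset W × Finset W, IsNontrivialBicliqueDecomp H m P} with h | h
  · exact Or.inl (by simp [tau', h])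
  · obtain ⟨k, hk, Q, hQ⟩ := csInf_mem h
    exact Or.inr ⟨k, Q, hQ, hk⟩

lemma tau_le_card_compl_add_tau' (G : SimpleGraph V) (U : Finset V) :
    (tau G : ℕ∞) ≤ #Uᶜ + tau' (G.induce (U : Set V)) := by
  obtain h | ⟨k, Q, hQ, hk⟩ := eq_top_or_exists_isNontrivialBicliqueDecomp_tau' (G.induce U)
  · simp [h]
  · rw [hk]
    exact_mod_cast (tau_le_card_compl_add_card hQ.isBicliquePartition).trans_eq (by simp)

end UpperBound

section LowerBound

variable {V ι : Type*} [DecidableEq V] [Fintype ι]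

def restrict (P : ι → Finset V × Finset V) (U : Finset V) (i : ι) : Finset V × Finset V :=
  ((P i).1 ∩ U, (P i).2 ∩ U)

lemma nonemptyIndices_restrict_mono (P : ι → Finset V × Finset V) {U U' : Finset V}
    (h : U' ⊆ U) : nonemptyIndices (restrict P U') ⊆ nonemptyIndices (restrict P U) := by
  intro i
  simp only [mem_nonemptyIndices, restrict]
  exact fun hi => ⟨hi.1.mono (inter_subset_inter_left h), hi.2.mono (inter_subset_inter_left h)⟩

lemma exists_not_nonempty_inter_erase {A U : Finset V} (hA : (A ∩ U).Nonempty)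
    (h : #(A ∩ U) < 2) : ∃ x ∈ U, ¬ (A ∩ U.erase x).Nonempty := by
  obtain ⟨x, hx⟩ := card_eq_one.mp (le_antisymm (Nat.lt_succ_iff.mp h) (card_pos.mpr hA))
  refine ⟨x, (mem_inter.mp (hx ▸ mem_singleton_self x)).2, ?_⟩
  rw [inter_erase, hx, erase_singleton]
  exact not_nonempty_empty

lemma exists_card_compl_add_card_nonemptyIndices_restrict_le [Fintype V]
    (P : ι → Finset V × Finset V) :
    ∃ U : Finset V, #Uᶜ + #(nonemptyIndices (restrict P U)) ≤ Fintype.card ι ∧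
      ∀ i ∈ nonemptyIndices (restrict P U),
        2 ≤ #((P i).1 ∩ U) ∧ 2 ≤ #((P i).2 ∩ U) := by
  obtain ⟨U, hU, hmin⟩ := exists_min_image
    (univ.filter fun U : Finset V => #Uᶜ + #(nonemptyIndices (restrict P U)) ≤ Fintype.card ι)
    card ⟨univ, by simp [card_le_univ]⟩
  rw [mem_filter] at hU
  refine ⟨U, hU.2, fun i hi => ?_⟩
  have hsurvives : ∀ x ∈ U, i ∈ nonemptyIndices (restrict P (U.erase x)) := by
    intro x hx
    by_contra hi'
    have hlt : #(nonemptyIndices (restrict P (U.erase x))) < #(nonemptyIndices (restrict P U)) :=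
      card_lt_card ((ssubset_iff_of_subset
        (nonemptyIndices_restrict_mono P (erase_subset x U))).mpr ⟨i, hi, hi'⟩)
    have hUx := card_erase_add_one hx
    have hcompl : #(U.erase x)ᶜ = #Uᶜ + 1 := by
      rw [card_compl, card_compl]
      have := card_le_univ U
      omega
    have := hmin (U.erase x) (mem_filter.mpr ⟨mem_univ _, by omega⟩)
    omega
  rw [mem_nonemptyIndices] at hi
  constructor <;> by_contra h
  · obtain ⟨x, hx, hx'⟩ := exists_not_nonempty_inter_erase hi.1 (not_le.mp h)
    exact hx' (mem_nonemptyIndices.mp (hsurvives x hx)).1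
  · obtain ⟨x, hx, hx'⟩ := exists_not_nonempty_inter_erase hi.2 (not_le.mp h)
    exact hx' (mem_nonemptyIndices.mp (hsurvives x hx)).2

lemma card_subtype_mem (A U : Finset V) : #(A.subtype (· ∈ U)) = #(A ∩ U) := by
  rw [card_subtype, filter_mem_eq_inter]

lemma IsBicliquePartition.tau'_induce_le {G : SimpleGraph V} {P : ι → Finset V × Finset V}
    (hP : IsBicliquePartition G P) {U : Finset V}
    (h2 : ∀ i ∈ nonemptyIndices (restrict P U),
      2 ≤ #((P i).1 ∩ U) ∧ 2 ≤ #((P i).2 ∩ U)) :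
    tau' (G.induce (U : Set V)) ≤ #(nonemptyIndices (restrict P U)) := by
  have hnonempty :
      nonemptyIndices (fun i => ((P i).1.subtype (· ∈ U), (P i).2.subtype (· ∈ U))) =
        nonemptyIndices (restrict P U) := by
    ext i
    simp only [mem_nonemptyIndices, restrict, ← card_pos, card_subtype_mem]
  rw [← hnonempty] at h2 ⊢
  refine (hP.induce U).tau'_le_card_nonemptyIndices fun i hi => ?_
  rw [card_subtype_mem, card_subtype_mem]
  exact h2 i hi

end LowerBound

theorem tau_eq_sub_add_tau'_general {V : Type*} [Fintype V] (G : SimpleGraph V) :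
    ∃ U : Finset V, (tau G : ℕ∞) =
      ((Fintype.card V - U.card : ℕ) : ℕ∞) + tau' (G.induce (U : Set V)) := by
  classical
  obtain ⟨P, hP⟩ := exists_isBicliqueDecomp_tau G
  obtain ⟨U, hcard, htwo⟩ := exists_card_compl_add_card_nonemptyIndices_restrict_le P
  refine ⟨U, ?_⟩
  rw [← card_compl]
  refine le_antisymm (tau_le_card_compl_add_tau' G U) ?_
  calc (#Uᶜ : ℕ∞) + tau' (G.induce (U : Set V))
    _ ≤ #Uᶜ + #(nonemptyIndices (restrict P U)) := by
      gcongr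
      exact hP.isBicliquePartition.tau'_induce_le htwo
    _ ≤ tau G := by
      rw [Fintype.card_fin] at hcard
      exact_mod_cast hcard

/-- Lemma 3.4: for every finite simple graph `G = (V,E)` there is `U ⊆ V`
with `τ(G) = |V| - |U| + τ'(G[U])`. -/
theorem tau_eq_sub_add_tau' {V : Type*} [Fintype V] [DecidableEq V] (G : SimpleGraph V) :
    ∃ U : Finset V, (tau G : ℕ∞) =
      ((Fintype.card V - U.card : ℕ) : ℕ∞) + tau' (G.induce (U : Set V)) :=
  tau_eq_sub_add_tau'_general G

end RandomBipartiteDecomposition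
end
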